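/- For every α > 0 and τ ∈ [0,1] and every ε ∈ ℝ, the smooth quantile loss satisfies 0 ≤ l(ε; τ, α) − ρ_τ(ε) ≤ α·log 2, where ρ_τ is the pinball loss; hence the smooth quantile loss converges uniformly to the pinball loss as α → 0⁺. -/

import Mathlib

/-!
Both losses differ by a term independent of `τ`: the gap equals `α * log (1 + exp (-|ε| / α))`,
using `log (1 + exp x) = x + log (1 + exp (-x))` when `ε < 0`. Since `exp (-|ε| / α) ∈ (0, 1]`,
that logarithm lies in `[0, log 2]`.
-/

open Real

namespace Real

lemma log_one_add_exp_nonneg (x : ℝ) : 0 ≤ log (1 + exp x) :=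
  log_nonneg (le_add_of_nonneg_right (exp_pos x).le)

lemma log_one_add_exp_le_log_two {x : ℝ} (hx : x ≤ 0) : log (1 + exp x) ≤ log 2 := by
  have : exp x ≤ 1 := exp_le_one_iff.mpr hx
  exact log_le_log (by positivity) (by linarith)

lemma log_one_add_exp_eq_add_log_one_add_exp_neg (x : ℝ) :
    log (1 + exp x) = x + log (1 + exp (-x)) := by
  have h : 1 + exp x = exp x * (1 + exp (-x)) := by
    rw [mul_add, mul_one, ← exp_add, add_neg_cancel, exp_zero, add_comm]
  rw [h, log_mul (exp_ne_zero x) (by positivity), log_exp]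

end Real

noncomputable def pinballLoss (τ ε : ℝ) : ℝ := if 0 ≤ ε then τ * ε else (τ - 1) * ε

noncomputable def smoothQuantileLoss (τ α ε : ℝ) : ℝ := τ * ε + α * log (1 + exp (-ε / α))

lemma smoothQuantileLoss_sub_pinballLoss (τ ε : ℝ) {α : ℝ} (hα : α ≠ 0) :
    smoothQuantileLoss τ α ε - pinballLoss τ ε = α * log (1 + exp (-|ε| / α)) := by
  unfold smoothQuantileLoss pinballLoss
  split_ifs with hε
  · rw [abs_of_nonneg hε]
    ring
  · rw [abs_of_neg (not_le.mp hε), neg_neg, log_one_add_exp_eq_add_log_one_add_exp_neg (-ε / α),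
      neg_div, neg_neg]
    field_simp
    ring

theorem smooth_quantile_loss_uniform_bound_general (τ α ε : ℝ) (hα : 0 < α) :
    0 ≤ (τ * ε + α * Real.log (1 + Real.exp (-ε / α)))
          - (if 0 ≤ ε then τ * ε else (τ - 1) * ε)
    ∧ (τ * ε + α * Real.log (1 + Real.exp (-ε / α)))
          - (if 0 ≤ ε then τ * ε else (τ - 1) * ε) ≤ α * Real.log 2 := by
  change 0 ≤ smoothQuantileLoss τ α ε - pinballLoss τ ε
    ∧ smoothQuantileLoss τ α ε - pinballLoss τ ε ≤ α * log 2
  rw [smoothQuantileLoss_sub_pinballLoss τ ε hα.ne']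
  have hexponent : -|ε| / α ≤ 0 :=
    div_nonpos_of_nonpos_of_nonneg (neg_nonpos.mpr (abs_nonneg ε)) hα.le
  exact ⟨mul_nonneg hα.le (log_one_add_exp_nonneg _),
    mul_le_mul_of_nonneg_left (log_one_add_exp_le_log_two hexponent) hα.le⟩

theorem smooth_quantile_loss_uniform_bound (τ α ε : ℝ) (hτ0 : 0 ≤ τ) (hτ1 : τ ≤ 1) (hα : 0 < α) :
    0 ≤ (τ * ε + α * Real.log (1 + Real.exp (-ε / α)))
          - (if 0 ≤ ε then τ * ε else (τ - 1) * ε)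
    ∧ (τ * ε + α * Real.log (1 + Real.exp (-ε / α)))
          - (if 0 ≤ ε then τ * ε else (τ - 1) * ε) ≤ α * Real.log 2 :=
  smooth_quantile_loss_uniform_bound_general τ α ε hα
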